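/- Let G be a finite group with trivial center and let u, v ∈ G. If ∼_v refines ∼_u, then ≈_v refines ≈_u, i.e., for all g, h ∈ G, g ≈_v h implies g ≈_u h. -/

import Mathlib

/-- A subrack of a group `G` is a subset closed under conjugation from within. -/
def IsSubrack {G : Type*} [Group G] (S : Set G) : Prop :=
  ∀ a ∈ S, ∀ b ∈ S, a * b * a⁻¹ ∈ S

/-- The subrack of `G` generated by a subset `T`: the smallest subrack containing `T`. -/
def subrackClosure {G : Type*} [Group G] (T : Set G) : Set G :=
  ⋂₀ {S : Set G | IsSubrack S ∧ T ⊆ S}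

/-- The conjugacy class of `a` in `G`. -/
def conjClass {G : Type*} [Group G] (a : G) : Set G :=
  {x : G | ∃ g : G, g * a * g⁻¹ = x}

/-- `B_G(a, g) = ⟨{a, g}⟩_rk ∩ K_G(g)`. -/
def subrackB {G : Type*} [Group G] (a g : G) : Set G :=
  subrackClosure {a, g} ∩ conjClass g

/-- The relation `∼ₐ` whose equivalence classes form the hypothetical pseudo cycle
form of `a`: `g ∼ₐ h` iff `g` and `h` lie in exactly the same sets `B_G(a, y)`. -/
def pseudoRel {G : Type*} [Group G] (a : G) (g h : G) : Prop :=
  ∀ y : G, g ∈ subrackB a y ↔ h ∈ subrackB a y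

/-- The abelian set associated with `a`: elements `x` such that `∼ₓ` refines `∼ₐ`. -/
def assocAbelianSet {G : Type*} [Group G] (a : G) : Set G :=
  {x : G | ∀ g h : G, pseudoRel x g h → pseudoRel a g h}

/-- The relation `≈ₐ` whose equivalence classes form the hypothetical cycle form of `a`. -/
def cycleRel {G : Type*} [Group G] (a : G) (g h : G) : Prop :=
  pseudoRel a g h ∧
    ∀ x : G, x * a = a * x → (x * g * x⁻¹ = g ↔ x * h * x⁻¹ = h)

/-!
If `x` commutes with `u`, then `{u, x}` is already a subrack, so `B_G(u, x) ⊆ {u, x}` and `x`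
is alone in its `∼ᵤ`-class. Conjugation by `v` permutes each `B_G(v, y)` (in a finite group a
subrack is closed under conjugation by inverses, these being powers), so `x ∼ᵥ v x v⁻¹`. If `∼ᵥ`
refines `∼ᵤ`, then for `x` in the centralizer of `u` this forces `v x v⁻¹ = x`: the centralizer
of `u` lies in that of `v`, and the fixed-point condition in `≈ᵥ` implies the one in `≈ᵤ`.
-/

section

variable {G : Type*} [Group G]

lemma subset_subrackClosure (T : Set G) : T ⊆ subrackClosure T :=
  fun _ hx => Set.mem_sInter.2 fun _ hS => hS.2 hx

lemma isSubrack_subrackClosure (T : Set G) : IsSubrack (subrackClosure T) := by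
  intro a ha b hb
  rw [subrackClosure, Set.mem_sInter] at *
  exact fun S hS => hS.1 a (ha S hS) b (hb S hS)

lemma subrackClosure_subset {T S : Set G} (hS : IsSubrack S) (hTS : T ⊆ S) :
    subrackClosure T ⊆ S :=
  Set.sInter_subset_of_mem ⟨hS, hTS⟩

lemma isSubrack_of_pairwise_commute {S : Set G} (hS : ∀ a ∈ S, ∀ b ∈ S, Commute a b) :
    IsSubrack S := by
  intro a ha b hb
  rwa [(hS a ha b hb).eq, mul_inv_cancel_right]

lemma isSubrack_pair {a b : G} (hab : Commute a b) : IsSubrack ({a, b} : Set G) := by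
  refine isSubrack_of_pairwise_commute ?_
  rintro x (rfl | rfl) y (rfl | rfl)
  exacts [Commute.refl _, hab, hab.symm, Commute.refl _]

lemma IsSubrack.pow_conj_mem {S : Set G} (hS : IsSubrack S) {v s : G} (hv : v ∈ S)
    (hs : s ∈ S) (n : ℕ) : v ^ n * s * (v ^ n)⁻¹ ∈ S := by
  induction n with
  | zero => simpa using hs
  | succ n ih =>
    have hstep := hS v hv _ ih
    rwa [pow_succ', mul_inv_rev, ← mul_assoc, mul_assoc v, mul_assoc v]

lemma IsSubrack.inv_conj_mem {S : Set G} (hS : IsSubrack S) {v s : G} (hfin : IsOfFinOrder v)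
    (hv : v ∈ S) (hs : s ∈ S) : v⁻¹ * s * v ∈ S := by
  obtain ⟨n, hn⟩ := hfin.mem_powers_iff_mem_zpowers.2 (inv_mem (Subgroup.mem_zpowers v))
  simpa [hn] using hS.pow_conj_mem hv hs n

lemma conj_mem_conjClass {y z : G} (hz : z ∈ conjClass y) (w : G) :
    w * z * w⁻¹ ∈ conjClass y := by
  obtain ⟨g, rfl⟩ := hz
  exact ⟨w * g, by group⟩

lemma self_mem_subrackB (a g : G) : g ∈ subrackB a g :=
  ⟨subset_subrackClosure _ (Set.mem_insert_of_mem a rfl), ⟨1, by group⟩⟩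

lemma conj_mem_subrackB_iff {v : G} (hv : IsOfFinOrder v) (y x : G) :
    v * x * v⁻¹ ∈ subrackB v y ↔ x ∈ subrackB v y := by
  have hvT : v ∈ subrackClosure {v, y} := subset_subrackClosure _ (Set.mem_insert v {y})
  constructor
  · rintro ⟨hcl, hconj⟩
    refine ⟨?_, ?_⟩
    · simpa [mul_assoc] using (isSubrack_subrackClosure _).inv_conj_mem hv hvT hcl
    · simpa [mul_assoc] using conj_mem_conjClass hconj v⁻¹
  · rintro ⟨hcl, hconj⟩
    exact ⟨isSubrack_subrackClosure _ v hvT x hcl, conj_mem_conjClass hconj v⟩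

lemma pseudoRel_conj {v : G} (hv : IsOfFinOrder v) (x : G) : pseudoRel v x (v * x * v⁻¹) :=
  fun y => (conj_mem_subrackB_iff hv y x).symm

lemma subrackB_subset_pair_of_commute {u x : G} (hux : Commute u x) : subrackB u x ⊆ {u, x} :=
  fun _ hz => subrackClosure_subset (isSubrack_pair hux) subset_rfl hz.1

lemma eq_of_pseudoRel_of_commute {u x w : G} (hxu : Commute x u) (hp : pseudoRel u x w) :
    w = x := by
  rcases subrackB_subset_pair_of_commute hxu.symm ((hp x).1 (self_mem_subrackB u x)) with
    rfl | hwx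
  · have hxw : x ∈ ({w, w} : Set G) :=
      subrackB_subset_pair_of_commute (Commute.refl w) ((hp w).2 (self_mem_subrackB w w))
    simp only [Set.mem_insert_iff, Set.mem_singleton_iff, or_self] at hxw
    exact hxw.symm
  · exact hwx

end

theorem cycleRel_refines_of_pseudoRel_refines_general
    {G : Type*} [Group G] [Finite G] (u v : G)
    (h : ∀ g h : G, pseudoRel v g h → pseudoRel u g h) :
    ∀ g h : G, cycleRel v g h → cycleRel u g h := by
  rintro g₀ h₀ ⟨hpv, hcv⟩
  refine ⟨h g₀ h₀ hpv, fun x hxu => hcv x ?_⟩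
  have hfix : v * x * v⁻¹ = x := eq_of_pseudoRel_of_commute hxu
    (h _ _ (pseudoRel_conj (isOfFinOrder_of_finite v) x))
  exact (mul_inv_eq_iff_eq_mul.1 hfix).symm

theorem cycleRel_refines_of_pseudoRel_refines
    {G : Type*} [Group G] [Finite G] (hZ : Subgroup.center G = ⊥) (u v : G)
    (h : ∀ g h : G, pseudoRel v g h → pseudoRel u g h) :
    ∀ g h : G, cycleRel v g h → cycleRel u g h :=
  cycleRel_refines_of_pseudoRel_refines_general u v h
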